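/- arXiv:1104.5100 — 2 statements merged into one kernel-verified Lean document; each statement's English description precedes it below -/
import Mathlib

section
/- Let u, v > 0 be real numbers and suppose k > 2 satisfies: |π − p/q| < 1/q^k holds for only finitely many coprime positive integers (p, q), and u − (k−1)·v > 1. Then the series ∑_{n=1}^∞ 1/(n^u · |sin n|^v) converges. -/
/-!
Finitely many exceptions to `|π - p/q| ≥ 1/q^k` can be absorbed into a constant, giving
`|π - p/q| ≥ c/q^k` for all `p, q ≥ 1`. If `mπ` is the multiple of `π` nearest to `n`, then
`m ≤ n` and, by Jordan's inequality, `|sin n| ≥ (2/π)|n - mπ| = (2/π) m |π - n/m| ≥ (2c/π)/n^(k-1)`.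
Hence the `n`-th term is `O(1/n^(u - (k-1)v))`, and the series is dominated by a convergent
`p`-series.
-/

open Real Filter Topology

def goodApproximations (x k : ℝ) : Set (ℕ × ℕ) :=
  {pq | 0 < pq.1 ∧ 0 < pq.2 ∧ Nat.Coprime pq.1 pq.2 ∧ |x - pq.1 / pq.2| < 1 / (pq.2 : ℝ) ^ k}

section Approximation

variable {x k : ℝ}

theorem Irrational.abs_sub_div_natCast_pos (hx : Irrational x) (p q : ℕ) : 0 < |x - p / q| :=
  abs_pos.2 <| sub_ne_zero.2 <| by simpa using hx.ne_rat (p / q)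

theorem Irrational.exists_pos_div_rpow_le_abs_sub_of_coprime (hx : Irrational x)
    (hfin : (goodApproximations x k).Finite) :
    ∃ c : ℝ, 0 < c ∧ c ≤ 1 ∧ ∀ p q : ℕ, 0 < p → 0 < q → Nat.Coprime p q →
      c / (q : ℝ) ^ k ≤ |x - p / q| := by
  have hS : ∀ᶠ c in 𝓝 (0 : ℝ), ∀ pq ∈ goodApproximations x k,
      c < |x - pq.1 / pq.2| * (pq.2 : ℝ) ^ k :=
    hfin.eventually_all.2 fun pq hpq => eventually_lt_nhds <|
      mul_pos (hx.abs_sub_div_natCast_pos _ _) (rpow_pos_of_pos (Nat.cast_pos.2 hpq.2.1) _)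
  obtain ⟨c, ⟨hcS, hc1⟩, hc0⟩ :=
    ((hS.and (eventually_lt_nhds one_pos)).filter_mono nhdsWithin_le_nhds
      |>.and self_mem_nhdsWithin : ∀ᶠ c in 𝓝[>] (0 : ℝ), _).exists
  refine ⟨c, hc0, hc1.le, fun p q hp hq hpq => ?_⟩
  have hqk : 0 < (q : ℝ) ^ k := rpow_pos_of_pos (Nat.cast_pos.2 hq) _
  by_cases hmem : |x - p / q| < 1 / (q : ℝ) ^ k
  · exact div_le_of_le_mul₀ hqk.le (abs_nonneg _) (hcS (p, q) ⟨hp, hq, hpq, hmem⟩).le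
  · exact (div_le_div_of_nonneg_right hc1.le hqk.le).trans (not_lt.1 hmem)

theorem Irrational.exists_pos_div_rpow_le_abs_sub (hx : Irrational x) (hk : 0 ≤ k)
    (hfin : (goodApproximations x k).Finite) :
    ∃ c : ℝ, 0 < c ∧ c ≤ 1 ∧ ∀ p q : ℕ, 0 < p → 0 < q → c / (q : ℝ) ^ k ≤ |x - p / q| := by
  obtain ⟨c, hc0, hc1, hc⟩ := hx.exists_pos_div_rpow_le_abs_sub_of_coprime hfin
  refine ⟨c, hc0, hc1, fun p q hp hq => ?_⟩
  obtain ⟨g, p', q', hg, hcop, rfl, rfl⟩ := Nat.exists_coprime' (Nat.gcd_pos_of_pos_left q hp)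
  have hq' : 0 < q' := Nat.pos_of_mul_pos_right hq
  have hfrac : ((p' * g : ℕ) : ℝ) / (q' * g : ℕ) = p' / q' := by
    push_cast
    exact mul_div_mul_right _ _ (Nat.cast_pos.2 hg).ne'
  calc c / ((q' * g : ℕ) : ℝ) ^ k ≤ c / (q' : ℝ) ^ k := by
        gcongr
        exact_mod_cast Nat.le_mul_of_pos_right q' hg
    _ ≤ |x - ((p' * g : ℕ) : ℝ) / (q' * g : ℕ)| :=
        hfrac ▸ hc p' q' (Nat.pos_of_mul_pos_right hp) hq' hcop

end Approximation

theorem exists_nat_le_abs_sub_mul_pi_le (n : ℕ) : ∃ m : ℕ, m ≤ n ∧ |n - m * π| ≤ π / 2 := by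
  set m := ⌊n / π + 1 / 2⌋₊
  have hm_le : (m : ℝ) ≤ n / π + 1 / 2 := Nat.floor_le (by positivity)
  have hm_gt : n / π + 1 / 2 < m + 1 := Nat.lt_floor_add_one _
  have hnπ : (n : ℝ) / π ≤ n := div_le_self (Nat.cast_nonneg n) (by linarith [pi_gt_three])
  refine ⟨m, Nat.lt_succ_iff.1 <| (Nat.floor_lt (by positivity)).2 (by push_cast; linarith), ?_⟩
  have hdiff : |(n : ℝ) / π - m| ≤ 1 / 2 := abs_le.2 ⟨by linarith, by linarith⟩
  calc |(n : ℝ) - m * π| = |(n : ℝ) / π - m| * π := by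
        rw [← abs_of_pos pi_pos, ← abs_mul, abs_of_pos pi_pos, sub_mul,
          div_mul_cancel₀ _ pi_ne_zero]
    _ ≤ 1 / 2 * π := by gcongr
    _ = π / 2 := by ring

theorem abs_sin_sub_nat_mul_pi (x : ℝ) (m : ℕ) : |sin (x - m * π)| = |sin x| := by
  rw [sin_sub_nat_mul_pi, abs_mul, abs_pow, abs_neg, abs_one, one_pow, one_mul]

theorem div_rpow_le_abs_natCast_sub_mul_pi {c k : ℝ} (hc0 : 0 ≤ c) (hc1 : c ≤ 1) (hk : 1 ≤ k)
    (hc : ∀ p q : ℕ, 0 < p → 0 < q → c / (q : ℝ) ^ k ≤ |π - p / q|)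
    {n m : ℕ} (hn : 0 < n) (hmn : m ≤ n) : c / (n : ℝ) ^ (k - 1) ≤ |n - m * π| := by
  have hn1 : (1 : ℝ) ≤ n := Nat.one_le_cast.2 hn
  rcases Nat.eq_zero_or_pos m with rfl | hm
  · have hle_one : c / (n : ℝ) ^ (k - 1) ≤ 1 :=
      div_le_one_of_le₀ (hc1.trans (one_le_rpow hn1 (by linarith))) (by positivity)
    simpa using hle_one.trans hn1
  · have hmR : (0 : ℝ) < m := Nat.cast_pos.2 hm
    calc c / (n : ℝ) ^ (k - 1) ≤ c / (m : ℝ) ^ (k - 1) := by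
          gcongr
      _ = m * (c / (m : ℝ) ^ k) := by
          rw [rpow_sub hmR, rpow_one]; field_simp
      _ ≤ m * |π - n / m| := by gcongr; exact hc n m hn hm
      _ = |n - m * π| := by
          rw [← abs_of_pos hmR, ← abs_mul, abs_of_pos hmR, abs_sub_comm]
          congr 1; field_simp

theorem summable_one_div_rpow_mul_rpow_of_div_rpow_le {s : ℕ → ℝ} {C a u v : ℝ} (hC : 0 < C)
    (hv : 0 ≤ v) (hs : ∀ n : ℕ, 0 < n → C / (n : ℝ) ^ a ≤ s n) (h : 1 < u - a * v) :
    Summable fun n : ℕ => 1 / ((n : ℝ) ^ u * s n ^ v) := by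
  refine ((summable_one_div_nat_rpow.2 h).mul_left (C ^ v)⁻¹).of_norm_bounded_eventually_nat ?_
  filter_upwards [eventually_gt_atTop 0] with n hn
  have hnR : (0 : ℝ) < n := Nat.cast_pos.2 hn
  have hsv : C ^ v / (n : ℝ) ^ (a * v) ≤ s n ^ v := by
    rw [rpow_mul hnR.le, ← div_rpow hC.le (by positivity)]
    exact rpow_le_rpow (by positivity) (hs n hn) hv
  have hden : C ^ v * (n : ℝ) ^ (u - a * v) ≤ (n : ℝ) ^ u * s n ^ v := by
    calc C ^ v * (n : ℝ) ^ (u - a * v) = (n : ℝ) ^ u * (C ^ v / (n : ℝ) ^ (a * v)) := by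
          rw [rpow_sub hnR]; ring
      _ ≤ (n : ℝ) ^ u * s n ^ v := by gcongr
  have hpos : 0 < C ^ v * (n : ℝ) ^ (u - a * v) := by positivity
  rw [Real.norm_of_nonneg (one_div_nonneg.2 (hpos.le.trans hden))]
  calc 1 / ((n : ℝ) ^ u * s n ^ v) ≤ 1 / (C ^ v * (n : ℝ) ^ (u - a * v)) :=
        one_div_le_one_div_of_le hpos hden
    _ = (C ^ v)⁻¹ * (1 / (n : ℝ) ^ (u - a * v)) := by ring

theorem exists_pos_div_rpow_le_abs_sin_natCast {k : ℝ} (hk : 1 ≤ k)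
    (hfin : (goodApproximations π k).Finite) :
    ∃ C : ℝ, 0 < C ∧ ∀ n : ℕ, 0 < n → C / (n : ℝ) ^ (k - 1) ≤ |sin n| := by
  obtain ⟨c, hc0, hc1, hc⟩ := irrational_pi.exists_pos_div_rpow_le_abs_sub (by linarith) hfin
  refine ⟨2 / π * c, by positivity, fun n hn => ?_⟩
  obtain ⟨m, hmn, hm⟩ := exists_nat_le_abs_sub_mul_pi_le n
  calc 2 / π * c / (n : ℝ) ^ (k - 1) = 2 / π * (c / (n : ℝ) ^ (k - 1)) := mul_div_assoc _ _ _
    _ ≤ 2 / π * |n - m * π| := by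
        gcongr
        exact div_rpow_le_abs_natCast_sub_mul_pi hc0.le hc1 hk hc hn hmn
    _ ≤ |sin (n - m * π)| := mul_abs_le_abs_sin hm
    _ = |sin n| := abs_sin_sub_nat_mul_pi _ _

open Real in
theorem series_converges_general (u v k : ℝ) (hv : 0 < v) (hk : 2 < k)
    (hfin : {pq : ℕ × ℕ | 0 < pq.1 ∧ 0 < pq.2 ∧ Nat.Coprime pq.1 pq.2 ∧
        |π - (pq.1 : ℝ) / (pq.2 : ℝ)| < 1 / (pq.2 : ℝ) ^ k}.Finite)
    (huv : 1 < u - (k - 1) * v) :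
    Summable (fun n : ℕ => 1 / ((n : ℝ) ^ u * |Real.sin n| ^ v)) := by
  obtain ⟨C, hC, hsin⟩ := exists_pos_div_rpow_le_abs_sin_natCast (by linarith) hfin
  exact summable_one_div_rpow_mul_rpow_of_div_rpow_le hC hv.le hsin huv

open Real in
theorem series_converges (u v k : ℝ) (hu : 0 < u) (hv : 0 < v) (hk : 2 < k)
    (hfin : {pq : ℕ × ℕ | 0 < pq.1 ∧ 0 < pq.2 ∧ Nat.Coprime pq.1 pq.2 ∧
        |π - (pq.1 : ℝ) / (pq.2 : ℝ)| < 1 / (pq.2 : ℝ) ^ k}.Finite)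
    (huv : 1 < u - (k - 1) * v) :
    Summable (fun n : ℕ => 1 / ((n : ℝ) ^ u * |Real.sin n| ^ v)) :=
  series_converges_general u v k hv hk hfin huv
end

section
/- Assuming that for every k > 7.6064 the inequality |π − p/q| < 1/q^k has only finitely many coprime positive integer solutions, the sequence 1/(n^7 · |sin n|) tends to 0 as n → ∞. -/
/-!
For `n ≥ 2` let `m` be the integer nearest to `n / π`. Then `|sin n| = |sin (n - m π)|`, and
Jordan's inequality gives `|sin n| ≥ (2 / π) m |π - n / m|`. An irrationality measure `k < 8`
for `π` bounds `|π - n / m|` below by `c / m ^ k`, hence `|sin n| ≥ (2 c / π) n ^ (1 - k)` and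
`n ^ 7 |sin n| ≥ (2 c / π) n ^ (8 - k) → ∞`.
-/

open Real Filter

def coprimeApprox (α k : ℝ) : Set (ℕ × ℕ) :=
  {pq | 0 < pq.1 ∧ 0 < pq.2 ∧ Nat.Coprime pq.1 pq.2 ∧
    |α - (pq.1 : ℝ) / (pq.2 : ℝ)| < 1 / (pq.2 : ℝ) ^ k}

lemma Set.Finite.exists_pos_forall_le {ι : Type*} {s : Set ι} (hs : s.Finite) {g : ι → ℝ}
    (hg : ∀ i ∈ s, 0 < g i) : ∃ c > 0, ∀ i ∈ s, c ≤ g i := by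
  rcases s.eq_empty_or_nonempty with rfl | hne
  · exact ⟨1, one_pos, by simp⟩
  · obtain ⟨i, hi, hmin⟩ := s.exists_min_image g hs hne
    exact ⟨g i, hg i hi, hmin⟩

lemma Irrational.abs_sub_natCast_div_pos {α : ℝ} (hα : Irrational α) (p q : ℕ) :
    0 < |α - p / q| := by
  rw [abs_pos, sub_ne_zero]
  simpa using hα.ne_rat (p / q)

lemma Nat.exists_coprime_div_eq {p q : ℕ} (hp : 0 < p) (hq : 0 < q) :
    ∃ p' q' : ℕ, 0 < p' ∧ 0 < q' ∧ Nat.Coprime p' q' ∧ q' ≤ q ∧ (p : ℝ) / q = p' / q' := by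
  obtain ⟨g, p', q', hg, hcop, rfl, rfl⟩ := Nat.exists_coprime' (Nat.gcd_pos_of_pos_left q hp)
  refine ⟨p', q', Nat.pos_of_mul_pos_right hp, Nat.pos_of_mul_pos_right hq, hcop,
    Nat.le_mul_of_pos_right q' hg, ?_⟩
  push_cast
  exact mul_div_mul_right _ _ (by positivity)

lemma Irrational.exists_pos_div_rpow_le_of_coprime {α k : ℝ} (hα : Irrational α)
    (hfin : (coprimeApprox α k).Finite) :
    ∃ c > 0, ∀ p q : ℕ, 0 < p → 0 < q → Nat.Coprime p q →
      c / (q : ℝ) ^ k ≤ |α - p / q| := by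
  obtain ⟨c, hc, hle⟩ := hfin.exists_pos_forall_le (g := fun pq => |α - pq.1 / pq.2| * pq.2 ^ k)
    fun pq hpq => mul_pos (hα.abs_sub_natCast_div_pos _ _) (by have := hpq.2.1; positivity)
  refine ⟨min c 1, lt_min hc one_pos, fun p q hp hq hpq => ?_⟩
  have hqk : 0 < (q : ℝ) ^ k := by positivity
  by_cases hmem : (p, q) ∈ coprimeApprox α k
  · rw [div_le_iff₀ hqk]
    exact (min_le_left c 1).trans (hle _ hmem)
  · have hge : 1 / (q : ℝ) ^ k ≤ |α - p / q| := not_lt.mp fun h => hmem ⟨hp, hq, hpq, h⟩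
    exact (div_le_div_of_nonneg_right (min_le_right c 1) hqk.le).trans hge

lemma Irrational.exists_pos_div_rpow_le {α k : ℝ} (hα : Irrational α) (hk : 0 ≤ k)
    (hfin : (coprimeApprox α k).Finite) :
    ∃ c > 0, ∀ p q : ℕ, 0 < p → 0 < q → c / (q : ℝ) ^ k ≤ |α - p / q| := by
  obtain ⟨c, hc, hcop⟩ := hα.exists_pos_div_rpow_le_of_coprime hfin
  refine ⟨c, hc, fun p q hp hq => ?_⟩
  obtain ⟨p', q', hp', hq', hpq', hq'q, heq⟩ := Nat.exists_coprime_div_eq hp hq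
  calc c / (q : ℝ) ^ k ≤ c / (q' : ℝ) ^ k := by gcongr
    _ ≤ |α - p / q| := heq ▸ hcop p' q' hp' hq' hpq'

lemma Real.two_div_pi_mul_abs_sub_round_mul_pi_le_abs_sin (x : ℝ) :
    2 / π * |x - round (x / π) * π| ≤ |sin x| := by
  have hhalf : |x - round (x / π) * π| ≤ π / 2 := by
    have hround := abs_sub_round (x / π)
    calc |x - round (x / π) * π| = |x / π - round (x / π)| * π := by
          rw [← abs_of_pos pi_pos, ← abs_mul, abs_of_pos pi_pos, sub_mul,
            div_mul_cancel₀ x pi_ne_zero]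
      _ ≤ 1 / 2 * π := by gcongr
      _ = π / 2 := by ring
  calc 2 / π * |x - round (x / π) * π| ≤ |sin (x - round (x / π) * π)| :=
        mul_abs_le_abs_sin hhalf
    _ = |sin x| := by rw [sin_sub_int_mul_pi, abs_mul, abs_neg_one_zpow, one_mul]

lemma Real.mul_rpow_one_sub_le_abs_sin_natCast {c k : ℝ} (hc : 0 ≤ c) (hk : 1 ≤ k)
    (hbound : ∀ p q : ℕ, 0 < p → 0 < q → c / (q : ℝ) ^ k ≤ |π - p / q|)
    {n : ℕ} (hn : 2 ≤ n) : 2 * c / π * (n : ℝ) ^ (1 - k) ≤ |sin n| := by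
  have hnr : (2 : ℝ) ≤ n := by exact_mod_cast hn
  have hsin := two_div_pi_mul_abs_sub_round_mul_pi_le_abs_sin n
  have hround := abs_le.mp (abs_sub_round ((n : ℝ) / π))
  have hlow : (2 : ℝ) / 3.15 ≤ n / π := by gcongr; exact pi_lt_d2.le
  have hup : (n : ℝ) / π ≤ n / 3 := by gcongr; exact pi_gt_three.le
  have hround0 : 0 ≤ round ((n : ℝ) / π) := by
    exact_mod_cast (by linarith : (0 : ℝ) ≤ round ((n : ℝ) / π))
  lift round ((n : ℝ) / π) to ℕ using hround0 with m
  push_cast at hsin hround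
  have hm0 : (0 : ℝ) < m := by linarith
  have hmn : (m : ℝ) ≤ n := by linarith
  have hdist : |(n : ℝ) - m * π| = m * |π - n / m| := by
    rw [← abs_of_pos hm0, ← abs_mul, ← abs_neg, abs_of_pos hm0]
    congr 1
    field_simp
    ring
  calc 2 * c / π * (n : ℝ) ^ (1 - k) ≤ 2 * c / π * (m : ℝ) ^ (1 - k) :=
        mul_le_mul_of_nonneg_left (rpow_le_rpow_of_nonpos hm0 hmn (by linarith)) (by positivity)
    _ = 2 / π * (m * (c / (m : ℝ) ^ k)) := by
        rw [rpow_sub hm0, rpow_one]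
        ring
    _ ≤ 2 / π * (m * |π - n / m|) := by
        gcongr
        exact hbound n m (by omega) (by exact_mod_cast hm0)
    _ ≤ |sin n| := hdist ▸ hsin

lemma Real.tendsto_pow_mul_abs_sin_natCast_atTop {c k : ℝ} (j : ℕ) (hc : 0 < c) (hk : 1 ≤ k)
    (hkj : k < j + 1) (hbound : ∀ p q : ℕ, 0 < p → 0 < q → c / (q : ℝ) ^ k ≤ |π - p / q|) :
    Tendsto (fun n : ℕ => (n : ℝ) ^ j * |sin n|) atTop atTop := by
  have hlow : ∀ᶠ n : ℕ in atTop, 2 * c / π * (n : ℝ) ^ ((j : ℝ) + 1 - k) ≤ n ^ j * |sin n| := by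
    filter_upwards [eventually_ge_atTop 2] with n hn
    have hn0 : (0 : ℝ) < n := by positivity
    calc 2 * c / π * (n : ℝ) ^ ((j : ℝ) + 1 - k) = n ^ j * (2 * c / π * (n : ℝ) ^ (1 - k)) := by
          rw [add_sub_assoc, rpow_add hn0, rpow_natCast]
          ring
      _ ≤ n ^ j * |sin n| :=
          mul_le_mul_of_nonneg_left (mul_rpow_one_sub_le_abs_sin_natCast hc.le hk hbound hn)
            (by positivity)
  refine tendsto_atTop_mono' atTop hlow (Tendsto.const_mul_atTop (by positivity) ?_)
  exact (tendsto_rpow_atTop (by linarith)).comp tendsto_natCast_atTop_atTop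

open Real Filter in
theorem seq_n7_sin_tendsto_zero
    (hmu : ∀ k : ℝ, 7.6064 < k →
      {pq : ℕ × ℕ | 0 < pq.1 ∧ 0 < pq.2 ∧ Nat.Coprime pq.1 pq.2 ∧
        |π - (pq.1 : ℝ) / (pq.2 : ℝ)| < 1 / (pq.2 : ℝ) ^ k}.Finite) :
    Tendsto (fun n : ℕ => 1 / ((n : ℝ) ^ 7 * |Real.sin n|)) atTop (nhds 0) := by
  obtain ⟨c, hc, hbound⟩ :=
    irrational_pi.exists_pos_div_rpow_le (k := 7.61) (by norm_num) (hmu 7.61 (by norm_num))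
  have hgrow := tendsto_pow_mul_abs_sin_natCast_atTop 7 hc (by norm_num) (by norm_num) hbound
  simpa only [one_div, Pi.inv_def] using hgrow.inv_tendsto_atTop
end
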